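/- arXiv:2304.03716 — 11 statements merged into one kernel-verified Lean document; each statement's English description precedes it below -/
import Mathlib

section
/- Let h₀, h_G be complex numbers, let a_q, b_q, a_p, b_p be nonnegative real numbers, and let s_q, s_p be complex numbers with |s_q|² ≤ a_q·b_q and |s_p|² ≤ a_p·b_p. Define S_q = |h₀|²·a_q + |h_G|²·b_q + 2·Re( conj(h₀)·h_G·s_q ) and S_p = |h₀|²·a_p + |h_G|²·b_p − 2·Re( conj(h₀)·h_G·s_p ). Then S_q · S_p ≥ 4|h₀·h_G|² ( √(a_q·b_q) − |s_q| ) ( √(a_p·b_p) − |s_p| ). -/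
/-!
With `x = |h₀| |h_G|`, AM–GM gives `|h₀|² a + |h_G|² b ≥ 2x√(ab)` and the cross term satisfies
`|Re(conj h₀ · h_G · s)| ≤ x |s|`. Hence each quadrature spectrum is bounded below by
`2x(√(ab) − |s|)`, which is nonnegative by the Cauchy–Schwarz bound `|s|² ≤ ab`; multiplying the two
bounds gives the relation. The phase quadrature is the amplitude one with `s` replaced by `-s`.
-/

open ComplexConjugate

noncomputable def quadratureSpectrum (z w : ℂ) (a b : ℝ) (s : ℂ) : ℝ :=
  ‖z‖ ^ 2 * a + ‖w‖ ^ 2 * b + 2 * (conj z * w * s).re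

lemma two_mul_mul_sqrt_mul_le (x y : ℝ) {a b : ℝ} (ha : 0 ≤ a) (hb : 0 ≤ b) :
    2 * x * y * √(a * b) ≤ x ^ 2 * a + y ^ 2 * b := by
  rw [Real.sqrt_mul ha]
  nlinarith [sq_nonneg (x * √a - y * √b), Real.sq_sqrt ha, Real.sq_sqrt hb]

lemma abs_re_conj_mul_mul_le (z w s : ℂ) : |(conj z * w * s).re| ≤ ‖z‖ * ‖w‖ * ‖s‖ :=
  calc |(conj z * w * s).re| ≤ ‖conj z * w * s‖ := Complex.abs_re_le_norm _
    _ = ‖z‖ * ‖w‖ * ‖s‖ := by simp only [norm_mul, Complex.norm_conj]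

lemma two_mul_norm_mul_sub_le_quadratureSpectrum (z w : ℂ) {a b : ℝ} (ha : 0 ≤ a) (hb : 0 ≤ b)
    (s : ℂ) : 2 * ‖z‖ * ‖w‖ * (√(a * b) - ‖s‖) ≤ quadratureSpectrum z w a b s := by
  have hamgm := two_mul_mul_sqrt_mul_le ‖z‖ ‖w‖ ha hb
  have hcross := (abs_le.mp (abs_re_conj_mul_mul_le z w s)).1
  unfold quadratureSpectrum
  linarith

lemma norm_mul_norm_mul_sub_nonneg (z w : ℂ) {c : ℝ} (s : ℂ) (hs : ‖s‖ ^ 2 ≤ c) :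
    0 ≤ 2 * ‖z‖ * ‖w‖ * (√c - ‖s‖) := by
  have : ‖s‖ ≤ √c := Real.le_sqrt_of_sq_le hs
  have : 0 ≤ √c - ‖s‖ := by linarith
  positivity

/-- General uncertainty relation for phase-insensitive feedback oscillators:
`S_q · S_p ≥ 4|h₀ h_G|² (√(a_q b_q) − |s_q|)(√(a_p b_p) − |s_p|)`. -/
theorem stmt_2 (h₀ hG : ℂ) (aq bq ap bp : ℝ)
    (haq : 0 ≤ aq) (hbq : 0 ≤ bq) (hap : 0 ≤ ap) (hbp : 0 ≤ bp)
    (sq sp : ℂ)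
    (hsq : ‖sq‖ ^ 2 ≤ aq * bq) (hsp : ‖sp‖ ^ 2 ≤ ap * bp) :
    (‖h₀‖ ^ 2 * aq + ‖hG‖ ^ 2 * bq
        + 2 * ((starRingEnd ℂ) h₀ * hG * sq).re)
      * (‖h₀‖ ^ 2 * ap + ‖hG‖ ^ 2 * bp
        - 2 * ((starRingEnd ℂ) h₀ * hG * sp).re)
      ≥ 4 * ‖h₀ * hG‖ ^ 2
        * (Real.sqrt (aq * bq) - ‖sq‖)
        * (Real.sqrt (ap * bp) - ‖sp‖) := by
  have hSq := two_mul_norm_mul_sub_le_quadratureSpectrum h₀ hG haq hbq sq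
  have hSp := two_mul_norm_mul_sub_le_quadratureSpectrum h₀ hG hap hbp (-sp)
  have hSp_eq : quadratureSpectrum h₀ hG ap bp (-sp)
      = ‖h₀‖ ^ 2 * ap + ‖hG‖ ^ 2 * bp - 2 * (conj h₀ * hG * sp).re := by
    simp only [quadratureSpectrum, mul_neg, Complex.neg_re]
    ring
  rw [norm_neg, hSp_eq] at hSp
  have hLq := norm_mul_norm_mul_sub_nonneg h₀ hG sq hsq
  have hLp := norm_mul_norm_mul_sub_nonneg h₀ hG sp hsp
  calc 4 * ‖h₀ * hG‖ ^ 2 * (√(aq * bq) - ‖sq‖) * (√(ap * bp) - ‖sp‖)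
      = 2 * ‖h₀‖ * ‖hG‖ * (√(aq * bq) - ‖sq‖) * (2 * ‖h₀‖ * ‖hG‖ * (√(ap * bp) - ‖sp‖)) := by
        rw [norm_mul]; ring
    _ ≤ _ := mul_le_mul hSq hSp hLp (hLq.trans hSq)
end

section
/- Let h₀, h_G be complex numbers and let a_q, b_q, a_p, b_p be nonnegative real numbers with a_q·a_p ≥ 1/4 and b_q·b_p ≥ 1/4. Define S_q = |h₀|²·a_q + |h_G|²·b_q and S_p = |h₀|²·a_p + |h_G|²·b_p. Then S_q · S_p ≥ |h₀|²·|h_G|². In particular, if additionally |h₀|² − |h_G|² = 1, then S_q · S_p ≥ |h₀|² (|h₀|² − 1). -/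
/-!
Expanding the product, `S_q S_p = |h₀|⁴ a_q a_p + |h_G|⁴ b_q b_p + |h₀|²|h_G|² (a_q b_p + a_p b_q)`.
The two Heisenberg bounds control the diagonal terms, and through AM–GM
(`(a_q b_p + a_p b_q)² ≥ 4 (a_q a_p)(b_q b_p) ≥ 1/4`) also the cross term, so
`S_q S_p ≥ (|h₀|² + |h_G|²)² / 4 ≥ |h₀|² |h_G|²`.
-/

section

variable {K : Type*} [Field K] [LinearOrder K] [IsStrictOrderedRing K]

theorem half_le_mul_add_mul_of_quarter_le_mul {a b c d : K} (ha : 0 ≤ a) (hb : 0 ≤ b)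
    (hac : 1 / 4 ≤ a * c) (hbd : 1 / 4 ≤ b * d) : 1 / 2 ≤ a * d + c * b := by
  have hc : 0 < c := pos_of_mul_pos_right (by linarith) ha
  have hd : 0 < d := pos_of_mul_pos_right (by linarith) hb
  have hsq : (1 / 2 : K) ^ 2 ≤ (a * d + c * b) ^ 2 :=
    calc (1 / 2 : K) ^ 2 = 4 * (1 / 4 * (1 / 4)) := by norm_num
      _ ≤ 4 * ((a * c) * (b * d)) := by gcongr
      _ = 4 * (a * d) * (c * b) := by ring
      _ ≤ (a * d + c * b) ^ 2 := four_mul_le_sq_add _ _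
  exact le_of_sq_le_sq hsq (by positivity)

theorem sq_add_div_four_le_mul_of_quarter_le_mul {A B aq bq ap bp : K} (hA : 0 ≤ A) (hB : 0 ≤ B)
    (haq : 0 ≤ aq) (hbq : 0 ≤ bq) (haqp : 1 / 4 ≤ aq * ap) (hbqp : 1 / 4 ≤ bq * bp) :
    (A + B) ^ 2 / 4 ≤ (A * aq + B * bq) * (A * ap + B * bp) := by
  have hcross : 1 / 2 ≤ aq * bp + ap * bq :=
    half_le_mul_add_mul_of_quarter_le_mul haq hbq haqp hbqp
  calc (A + B) ^ 2 / 4 = A ^ 2 * (1 / 4) + B ^ 2 * (1 / 4) + A * B * (1 / 2) := by ring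
    _ ≤ A ^ 2 * (aq * ap) + B ^ 2 * (bq * bp) + A * B * (aq * bp + ap * bq) := by gcongr
    _ = (A * aq + B * bq) * (A * ap + B * bp) := by ring

end

theorem stmt_3_general (h₀ hG : ℂ) (aq bq ap bp : ℝ)
    (haq : 0 ≤ aq) (hbq : 0 ≤ bq)
    (hHeis0 : aq * ap ≥ 1 / 4) (hHeisG : bq * bp ≥ 1 / 4) :
    (‖h₀‖ ^ 2 * aq + ‖hG‖ ^ 2 * bq)
        * (‖h₀‖ ^ 2 * ap + ‖hG‖ ^ 2 * bp)
      ≥ ‖h₀‖ ^ 2 * ‖hG‖ ^ 2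
    ∧ (‖h₀‖ ^ 2 - ‖hG‖ ^ 2 = 1 →
        (‖h₀‖ ^ 2 * aq + ‖hG‖ ^ 2 * bq)
          * (‖h₀‖ ^ 2 * ap + ‖hG‖ ^ 2 * bp)
        ≥ ‖h₀‖ ^ 2 * (‖h₀‖ ^ 2 - 1)) := by
  have hbound : ‖h₀‖ ^ 2 * ‖hG‖ ^ 2
      ≤ (‖h₀‖ ^ 2 * aq + ‖hG‖ ^ 2 * bq) * (‖h₀‖ ^ 2 * ap + ‖hG‖ ^ 2 * bp) :=
    calc ‖h₀‖ ^ 2 * ‖hG‖ ^ 2 ≤ (‖h₀‖ ^ 2 + ‖hG‖ ^ 2) ^ 2 / 4 := by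
          linarith [four_mul_le_sq_add (‖h₀‖ ^ 2) (‖hG‖ ^ 2)]
      _ ≤ _ := sq_add_div_four_le_mul_of_quarter_le_mul (by positivity) (by positivity)
          haq hbq hHeis0 hHeisG
  refine ⟨hbound, fun hcomm => ?_⟩
  rwa [show ‖h₀‖ ^ 2 - 1 = ‖hG‖ ^ 2 by linarith]

/-- State-independent uncertainty bound for a feedback oscillator with uncorrelated
in-coupled and ancillary modes: `S_q S_p ≥ |h₀|²|h_G|²`, and if `|h₀|² − |h_G|² = 1`
then `S_q S_p ≥ |h₀|²(|h₀|² − 1)`. -/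
theorem stmt_3 (h₀ hG : ℂ) (aq bq ap bp : ℝ)
    (haq : 0 ≤ aq) (hbq : 0 ≤ bq) (hap : 0 ≤ ap) (hbp : 0 ≤ bp)
    (hHeis0 : aq * ap ≥ 1 / 4) (hHeisG : bq * bp ≥ 1 / 4) :
    (‖h₀‖ ^ 2 * aq + ‖hG‖ ^ 2 * bq)
        * (‖h₀‖ ^ 2 * ap + ‖hG‖ ^ 2 * bp)
      ≥ ‖h₀‖ ^ 2 * ‖hG‖ ^ 2
    ∧ (‖h₀‖ ^ 2 - ‖hG‖ ^ 2 = 1 →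
        (‖h₀‖ ^ 2 * aq + ‖hG‖ ^ 2 * bq)
          * (‖h₀‖ ^ 2 * ap + ‖hG‖ ^ 2 * bp)
        ≥ ‖h₀‖ ^ 2 * (‖h₀‖ ^ 2 - 1)) :=
  stmt_3_general h₀ hG aq bq ap bp haq hbq hHeis0 hHeisG
end

section
/- Let η be a real number with 0 < η < 1 and let θ be a real number with e^{iθ} ≠ −1. Then (1/2)( |H₀(θ)|² + |H_G(θ)|² ) = (1/√η − √η)² / (4 cos²(θ/2)) + 1/2, where H₀(θ) = (√η + e^{iθ}/√η)/(1 + e^{iθ}) and H_G(θ) = (1/√η − √η)/(1 + e^{iθ}). -/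
/-!
Both transfer functions have the denominator `1 + e^{iθ}`, whose squared modulus is
`2 + 2 cos θ = 4 cos²(θ/2)`, while `|√η + e^{iθ}/√η|² = η + 1/η + 2 cos θ`. Adding
`(1/√η − √η)² = η + 1/η − 2` and halving leaves `(1/√η − √η)² + (1 + cos θ)` over
`4 cos²(θ/2)`, and `1 + cos θ = 2 cos²(θ/2)` gives the constant `1/2`.
-/

open Complex

theorem norm_ofReal_add_mul_exp_mul_I_sq (a b θ : ℝ) :
    ‖(a : ℂ) + b * exp (θ * I)‖ ^ 2 = a ^ 2 + b ^ 2 + 2 * a * b * Real.cos θ := by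
  rw [Complex.sq_norm, Complex.normSq_apply]
  simp only [add_re, add_im, ofReal_re, ofReal_im, re_ofReal_mul, im_ofReal_mul,
    exp_ofReal_mul_I_re, exp_ofReal_mul_I_im]
  nlinarith [Real.sin_sq_add_cos_sq θ]

theorem cos_eq_two_mul_cos_half_sq (θ : ℝ) : Real.cos θ = 2 * Real.cos (θ / 2) ^ 2 - 1 := by
  rw [← Real.cos_two_mul, mul_div_cancel₀ θ two_ne_zero]

theorem norm_one_add_exp_mul_I_sq (θ : ℝ) :
    ‖1 + exp (θ * I)‖ ^ 2 = 4 * Real.cos (θ / 2) ^ 2 := by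
  have h := norm_ofReal_add_mul_exp_mul_I_sq 1 1 θ
  rw [ofReal_one, one_mul] at h
  rw [h, cos_eq_two_mul_cos_half_sq]
  ring

theorem cos_half_ne_zero_of_exp_mul_I_ne_neg_one {θ : ℝ} (hθ : exp (θ * I) ≠ -1) :
    Real.cos (θ / 2) ≠ 0 := by
  have h : ‖1 + exp (θ * I)‖ ^ 2 ≠ 0 := by
    rw [pow_ne_zero_iff two_ne_zero, norm_ne_zero_iff]
    exact fun h => hθ (eq_neg_of_add_eq_zero_right h)
  rw [norm_one_add_exp_mul_I_sq] at h
  exact fun h0 => h (by rw [h0]; ring)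

theorem stmt_5_general (η θ : ℝ) (hη0 : 0 < η)
    (hθ : Complex.exp (θ * Complex.I) ≠ -1) :
    (1 / 2) * (‖(((Real.sqrt η : ℂ)
          + Complex.exp (θ * Complex.I) / (Real.sqrt η : ℂ))
          / (1 + Complex.exp (θ * Complex.I)))‖ ^ 2
        + ‖(((1 / Real.sqrt η - Real.sqrt η : ℝ) : ℂ)
          / (1 + Complex.exp (θ * Complex.I)))‖ ^ 2)
      = (1 / Real.sqrt η - Real.sqrt η) ^ 2 / (4 * Real.cos (θ / 2) ^ 2) + 1 / 2 := by
  set s := Real.sqrt η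
  have hs : s ≠ 0 := (Real.sqrt_pos.mpr hη0).ne'
  have hcos_half := cos_half_ne_zero_of_exp_mul_I_ne_neg_one hθ
  have hnum : (s : ℂ) + exp (θ * I) / (s : ℂ) = (s : ℂ) + ((1 / s : ℝ) : ℂ) * exp (θ * I) := by
    push_cast; ring
  rw [hnum, norm_div, norm_div, div_pow, div_pow, norm_ofReal_add_mul_exp_mul_I_sq,
    norm_one_add_exp_mul_I_sq, Complex.norm_real, Real.norm_eq_abs, sq_abs,
    cos_eq_two_mul_cos_half_sq θ]
  field_simp
  ring

/-- Output quadrature spectrum of a feedback oscillator at gain–loss balance with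
vacuum inputs: `(1/2)(|H₀(θ)|² + |H_G(θ)|²) = (1/√η − √η)²/(4cos²(θ/2)) + 1/2`. -/
theorem stmt_5 (η θ : ℝ) (hη0 : 0 < η) (hη1 : η < 1)
    (hθ : Complex.exp (θ * Complex.I) ≠ -1) :
    (1 / 2) * (‖(((Real.sqrt η : ℂ)
          + Complex.exp (θ * Complex.I) / (Real.sqrt η : ℂ))
          / (1 + Complex.exp (θ * Complex.I)))‖ ^ 2
        + ‖(((1 / Real.sqrt η - Real.sqrt η : ℝ) : ℂ)
          / (1 + Complex.exp (θ * Complex.I)))‖ ^ 2)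
      = (1 / Real.sqrt η - Real.sqrt η) ^ 2 / (4 * Real.cos (θ / 2) ^ 2) + 1 / 2 :=
  stmt_5_general η θ hη0 hθ
end

section
/- Let η, τ, be real numbers with 0 < η < 1 and τ > 0, let α be a nonzero complex number, let n be an integer, and set Ω₀ = (2n+1)π/τ. Then the limit as ω → 0 (ω ≠ 0) of (ω²/(2|α|²)) · [ (1/√η − √η)² / (4 cos²((Ω₀ + ω)τ/2)) + 1/2 ] equals (1 − η)² / (2 η τ² |α|²). -/
/-! At the loop resonance `cos (Ω₀ τ / 2) = 0`, so `4 cos² ((Ω₀ + ω) τ / 2) = 4 sin² (τ ω / 2) ~ τ² ω²`: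
the factor `ω²` exactly cancels the pole of the phase-quadrature spectrum, leaving
`(1/√η - √η)² / τ² = (1 - η)² / (η τ²)`, while the vacuum term `1/2` is killed by `ω²`. -/

open Filter Real Topology

theorem one_div_sqrt_sub_sqrt_sq {η : ℝ} (hη : 0 ≤ η) :
    (1 / √η - √η) ^ 2 = (1 - η) ^ 2 / η := by
  rcases hη.eq_or_lt with rfl | hη
  · simp
  have hsqrt : √η ≠ 0 := (sqrt_pos.mpr hη).ne'
  conv_rhs => rw [← sq_sqrt hη.le]
  field_simp

theorem cos_add_odd_mul_pi_div_two_sq (x : ℝ) (n : ℤ) :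
    cos (x + (2 * n + 1) * π / 2) ^ 2 = sin x ^ 2 := by
  have harg : x + (2 * n + 1) * π / 2 = x + π / 2 + n * π := by ring
  rw [harg, cos_add_int_mul_pi, cos_add_pi_div_two, mul_pow, neg_sq,
    ← sq_abs ((-1 : ℝ) ^ n), abs_neg_one_zpow, one_pow, one_mul]

theorem sq_div_four_sin_sq_eq_inv_sinc {τ x : ℝ} (hτ : τ ≠ 0) (hx : x ≠ 0) :
    x ^ 2 / (4 * sin (τ / 2 * x) ^ 2) = (τ ^ 2 * sinc (τ / 2 * x) ^ 2)⁻¹ := by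
  rw [← inv_div, sinc_of_ne_zero (by positivity)]
  field_simp
  norm_num

theorem tendsto_sq_mul_div_four_sin_sq_add_half {τ : ℝ} (hτ : τ ≠ 0) (c : ℝ) :
    Tendsto (fun ω : ℝ => ω ^ 2 * (c / (4 * sin (τ / 2 * ω) ^ 2) + 1 / 2)) (𝓝[≠] 0)
      (𝓝 (c / τ ^ 2)) := by
  have hsinc : Tendsto (fun ω : ℝ => (τ ^ 2 * sinc (τ / 2 * ω) ^ 2)⁻¹) (𝓝 0) (𝓝 (τ ^ 2)⁻¹) := by
    have hcont : Continuous (fun ω : ℝ => τ ^ 2 * sinc (τ / 2 * ω) ^ 2) := by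
      fun_prop
    simpa using (hcont.tendsto 0).inv₀ (by simpa using hτ)
  have hsq : Tendsto (fun ω : ℝ => ω ^ 2 / 2) (𝓝 0) (𝓝 0) := by
    simpa using ((continuous_pow 2).div_const (2 : ℝ)).tendsto (0 : ℝ)
  have hlim := (hsinc.const_mul c).add hsq
  rw [add_zero, ← div_eq_mul_inv] at hlim
  refine (tendsto_nhdsWithin_of_tendsto_nhds hlim).congr' ?_
  filter_upwards [self_mem_nhdsWithin] with ω hω
  rw [← sq_div_four_sin_sq_eq_inv_sinc hτ hω]
  ring

theorem stmt_6_general (η τ : ℝ) (hη0 : 0 < η) (hτ : 0 < τ)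
    (α : ℂ) (n : ℤ) (Ω₀ : ℝ) (hΩ₀ : Ω₀ = (2 * n + 1) * Real.pi / τ) :
    Filter.Tendsto
      (fun ω : ℝ =>
        (ω ^ 2 / (2 * ‖α‖ ^ 2)) *
          ((1 / Real.sqrt η - Real.sqrt η) ^ 2
              / (4 * Real.cos ((Ω₀ + ω) * τ / 2) ^ 2) + 1 / 2))
      (nhdsWithin 0 {(0 : ℝ)}ᶜ)
      (nhds ((1 - η) ^ 2 / (2 * η * τ ^ 2 * ‖α‖ ^ 2))) := by
  have hcos (ω : ℝ) : cos ((Ω₀ + ω) * τ / 2) ^ 2 = sin (τ / 2 * ω) ^ 2 := by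
    rw [← cos_add_odd_mul_pi_div_two_sq _ n, hΩ₀]
    congr 2
    field_simp
    ring
  have hlim := (tendsto_sq_mul_div_four_sin_sq_add_half hτ.ne'
    ((1 / √η - √η) ^ 2)).const_mul (1 / (2 * ‖α‖ ^ 2))
  convert hlim using 2 with ω
  · rw [hcos]
    ring
  · rw [one_div_sqrt_sub_sqrt_sq hη0.le]
    ring

/-- Schawlow–Townes formula for a feedback oscillator: near the loop resonance
`Ω₀ = (2n+1)π/τ`, the output frequency-noise spectrum
`(ω²/(2|α|²))·S̄_pp^out[Ω₀+ω]` tends to `(1−η)²/(2ητ²|α|²)` as `ω → 0`. -/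
theorem stmt_6 (η τ : ℝ) (hη0 : 0 < η) (hη1 : η < 1) (hτ : 0 < τ)
    (α : ℂ) (hα : α ≠ 0) (n : ℤ) (Ω₀ : ℝ) (hΩ₀ : Ω₀ = (2 * n + 1) * Real.pi / τ) :
    Filter.Tendsto
      (fun ω : ℝ =>
        (ω ^ 2 / (2 * ‖α‖ ^ 2)) *
          ((1 / Real.sqrt η - Real.sqrt η) ^ 2
              / (4 * Real.cos ((Ω₀ + ω) * τ / 2) ^ 2) + 1 / 2))
      (nhdsWithin 0 {(0 : ℝ)}ᶜ)
      (nhds ((1 - η) ^ 2 / (2 * η * τ ^ 2 * ‖α‖ ^ 2))) :=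
  stmt_6_general η τ hη0 hτ α n Ω₀ hΩ₀
end

section
/- Let η, r, θ be real numbers with 0 < η < 1 and cos(θ/2) ≠ 0, and define f = e^{r}/(4η) + (e^{−r}/4)·( (1/η − 2)·tan²(θ/2) + η/cos²(θ/2) ). Then f ≥ 1/2, and hence f² ≥ 1/4. -/
/-- EPR entanglement cannot beat the Heisenberg bound: the exact output
quadrature spectrum `f` of a feedback oscillator with EPR-entangled in-coupled and
ancillary modes satisfies `f ≥ 1/2`, hence `f² ≥ 1/4`. -/
theorem stmt_12 (η r θ : ℝ) (hη0 : 0 < η) (hη1 : η < 1)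
    (hθ : Real.cos (θ / 2) ≠ 0) :
    Real.exp r / (4 * η)
        + (Real.exp (-r) / 4) * ((1 / η - 2) * Real.tan (θ / 2) ^ 2
          + η / Real.cos (θ / 2) ^ 2)
      ≥ 1 / 2
    ∧ (Real.exp r / (4 * η)
        + (Real.exp (-r) / 4) * ((1 / η - 2) * Real.tan (θ / 2) ^ 2
          + η / Real.cos (θ / 2) ^ 2)) ^ 2
      ≥ 1 / 4 := by
  set c := Real.cos (θ / 2) with hc
  have hc2 : (0:ℝ) < c ^ 2 := by positivity
  have htan : Real.tan (θ / 2) ^ 2 = Real.sin (θ / 2) ^ 2 / c ^ 2 := by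
    rw [Real.tan_eq_sin_div_cos, div_pow]
  have hs : Real.sin (θ / 2) ^ 2 = 1 - c ^ 2 := by
    have := Real.sin_sq_add_cos_sq (θ / 2); linarith
  have hT : Real.tan (θ / 2) ^ 2 = 1 / c ^ 2 - 1 := by
    rw [htan, hs]; field_simp
  have hinv : (1:ℝ) / c ^ 2 ≥ 1 := by
    rw [ge_iff_le, le_div_iff₀ hc2]
    nlinarith [Real.neg_one_le_cos (θ / 2), Real.cos_le_one (θ / 2)]
  have he : Real.exp r * Real.exp (-r) = 1 := by
    rw [← Real.exp_add]; simp
  have hep : (0:ℝ) < Real.exp r := Real.exp_pos r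
  have hen : (0:ℝ) < Real.exp (-r) := Real.exp_pos (-r)
  have key : Real.exp r / (4 * η)
        + (Real.exp (-r) / 4) * ((1 / η - 2) * Real.tan (θ / 2) ^ 2
          + η / c ^ 2) ≥ 1 / 2 := by
    rw [hT]
    set u := (1:ℝ) / c ^ 2 with hu
    have h1 : (1 / η - 2) * (u - 1) + η * u
        = ((1 - η)^2 / η) * (u - 1) + η := by
      field_simp; ring
    have hηu : η / c ^ 2 = η * u := by rw [hu]; ring
    rw [hηu, h1]
    have h2 : ((1 - η)^2 / η) * (u - 1) ≥ 0 := by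
      apply mul_nonneg (by positivity); linarith
    have h3 : Real.exp r / (4 * η) + (Real.exp (-r) / 4) * η ≥ 1 / 2 := by
      rw [ge_iff_le, div_add' _ _ _ (by positivity), le_div_iff₀ (by positivity)]
      nlinarith [mul_nonneg hep.le (sq_nonneg (1 - Real.exp (-r) * η)), he, mul_pos hep hen]
    nlinarith
  exact ⟨key, by nlinarith⟩
end

section
/- Let η be a real number with 0 < η < 1 and let θ be a real number with e^{iθ} ≠ −1. Define H₀^q(θ) = (√η + e^{iθ}/√η)/(1 + e^{iθ}) and H₀^p(θ) = (e^{iθ}/√η + 1/√η)/(1/η + e^{iθ}). Then |H₀^q(θ) · H₀^p(θ)| = 1. -/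
/-!
With `s = √η` and `z = e^{iθ}`, the product `H₀^q H₀^p` collapses to the Möbius factor
`(η + z) / (1 + η z)`. On the unit circle `η + z = z · conj (1 + η z)`, so numerator and
denominator have the same modulus.
-/

open Complex ComplexConjugate

theorem norm_add_eq_norm_one_add_conj_mul {z : ℂ} (hz : ‖z‖ = 1) (a : ℂ) :
    ‖a + z‖ = ‖1 + conj a * z‖ := by
  have hzz : z * conj z = 1 := by
    rw [mul_conj, normSq_eq_norm_sq, hz]; norm_num
  calc ‖a + z‖ = ‖z * conj (1 + conj a * z)‖ := by
        congr 1
        simp only [map_add, map_mul, map_one, conj_conj]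
        linear_combination (-a) * hzz
    _ = ‖1 + conj a * z‖ := by rw [norm_mul, hz, one_mul, norm_conj]

theorem ofReal_add_ne_zero_of_norm_eq_one {a : ℝ} (ha : 0 < a) {z : ℂ} (hz : ‖z‖ = 1)
    (hz₁ : z ≠ -1) : (a : ℂ) + z ≠ 0 := by
  intro h
  have hza : z = -a := by linear_combination h
  have ha₁ : a = 1 := by simpa [hza, abs_of_pos ha] using hz
  exact hz₁ (by simp [hza, ha₁])

theorem div_add_mul_div_eq_moebius {K : Type*} [Field K] {s z : K} (hs : s ≠ 0)
    (hz : 1 + z ≠ 0) (hsz : 1 + s ^ 2 * z ≠ 0) :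
    (s + z / s) / (1 + z) * ((z / s + 1 / s) / (1 / s ^ 2 + z)) =
      (s ^ 2 + z) / (1 + s ^ 2 * z) := by
  have hden : 1 / s ^ 2 + z = (1 + s ^ 2 * z) / s ^ 2 := by field_simp
  rw [hden]
  field_simp
  ring

theorem stmt_14_general (η θ : ℝ) (hη0 : 0 < η)
    (hθ : Complex.exp (θ * Complex.I) ≠ -1) :
    ‖(((Real.sqrt η : ℂ) + Complex.exp (θ * Complex.I) / (Real.sqrt η : ℂ))
          / (1 + Complex.exp (θ * Complex.I)))
        * ((Complex.exp (θ * Complex.I) / (Real.sqrt η : ℂ) + 1 / (Real.sqrt η : ℂ))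
          / (1 / (η : ℂ) + Complex.exp (θ * Complex.I)))‖ = 1 := by
  set z := Complex.exp (θ * Complex.I)
  have hz : ‖z‖ = 1 := norm_exp_ofReal_mul_I θ
  have hs : (Real.sqrt η : ℂ) ≠ 0 := by simpa using (Real.sqrt_pos.2 hη0).ne'
  have hsq : (Real.sqrt η : ℂ) ^ 2 = η := by exact_mod_cast Real.sq_sqrt hη0.le
  have hnum : (η : ℂ) + z ≠ 0 := ofReal_add_ne_zero_of_norm_eq_one hη0 hz hθ
  have hnorm : ‖(η : ℂ) + z‖ = ‖1 + (η : ℂ) * z‖ := by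
    simpa only [conj_ofReal] using norm_add_eq_norm_one_add_conj_mul hz η
  have hden : ‖1 + (η : ℂ) * z‖ ≠ 0 := hnorm ▸ norm_ne_zero_iff.mpr hnum
  have hz₁ : 1 + z ≠ 0 := fun h => hθ (by linear_combination h)
  rw [← hsq, div_add_mul_div_eq_moebius hs hz₁ (hsq ▸ norm_ne_zero_iff.mp hden), hsq,
    norm_div, hnorm, div_self hden]

/-- A feedback oscillator with a purely phase-sensitive (noiseless) in-loop
amplifier preserves the uncertainty product: `|H₀^q(θ) · H₀^p(θ)| = 1`. -/
theorem stmt_14 (η θ : ℝ) (hη0 : 0 < η) (hη1 : η < 1)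
    (hθ : Complex.exp (θ * Complex.I) ≠ -1) :
    ‖(((Real.sqrt η : ℂ) + Complex.exp (θ * Complex.I) / (Real.sqrt η : ℂ))
          / (1 + Complex.exp (θ * Complex.I)))
        * ((Complex.exp (θ * Complex.I) / (Real.sqrt η : ℂ) + 1 / (Real.sqrt η : ℂ))
          / (1 / (η : ℂ) + Complex.exp (θ * Complex.I)))‖ = 1 :=
  stmt_14_general η θ hη0 hθ
end

section
/- Let η, r be real numbers with 0 < η < 1 and 0 < r ≤ −(1/2)·ln η. Define H₀ᵖ(θ) = (e^{iθ}/√η + e^{2r}√η)/(e^{2r} + e^{iθ}) and H_Gᵖ(θ) = √(1/η − e^{2r})·√(1 − η)/(e^{2r} + e^{iθ}). Then (1/2)|H₀ᵖ(π)|² + (1/2)|H_Gᵖ(π)|² = [ (1 − η e^{2r})² + (1 − η e^{2r})(1 − η) ] / ( 2 η (e^{2r} − 1)² ). -/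
/-! At resonance `e^{iπ} = -1`, so both transfer functions become real numbers divided by
`e^{2r} - 1`, and their squared moduli are the squares of those real numbers. Both numerators
carry the common factor `1 - η e^{2r}` (over `η`), which is nonnegative by the gain–loss bound
`η e^{2r} ≤ 1`; this is what makes the square roots in `H_Gᵖ` square back to their radicands. -/

open Real

lemma mul_exp_two_mul_le_one {η r : ℝ} (hη : 0 < η) (hr : r ≤ -(1 / 2) * log η) :
    η * exp (2 * r) ≤ 1 := by
  calc η * exp (2 * r) = exp (log η + 2 * r) := by rw [exp_add, exp_log hη]
    _ ≤ exp 0 := exp_le_exp.2 (by linarith)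
    _ = 1 := exp_zero

lemma norm_ofReal_div_add_neg_one_sq (x E : ℝ) :
    ‖(x : ℂ) / ((E : ℂ) + -1)‖ ^ 2 = x ^ 2 / (E - 1) ^ 2 := by
  rw [← sub_eq_add_neg, ← Complex.ofReal_one, ← Complex.ofReal_sub, ← Complex.ofReal_div,
    Complex.norm_real, Real.norm_eq_abs, sq_abs, div_pow]

lemma mul_sqrt_sub_inv_sqrt_sq {η : ℝ} (hη : 0 < η) (E : ℝ) :
    (E * √η - 1 / √η) ^ 2 = (1 - η * E) ^ 2 / η := by
  have hs : √η ≠ 0 := (sqrt_pos.2 hη).ne'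
  field_simp
  rw [sq_sqrt hη.le]
  ring

theorem stmt_15_general (η r : ℝ) (hη0 : 0 < η) (hη1 : η < 1)
    (hr : r ≤ -(1 / 2) * Real.log η) :
    (1 / 2) * ‖
        ((Complex.exp ((Real.pi : ℂ) * Complex.I) / (Real.sqrt η : ℂ)
            + ((Real.exp (2 * r) : ℝ) : ℂ) * (Real.sqrt η : ℂ))
          / (((Real.exp (2 * r) : ℝ) : ℂ) + Complex.exp ((Real.pi : ℂ) * Complex.I)))‖ ^ 2
      + (1 / 2) * ‖
        ((((Real.sqrt (1 / η - Real.exp (2 * r)) * Real.sqrt (1 - η) : ℝ)) : ℂ)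
          / (((Real.exp (2 * r) : ℝ) : ℂ) + Complex.exp ((Real.pi : ℂ) * Complex.I)))‖ ^ 2
    = ((1 - η * Real.exp (2 * r)) ^ 2 + (1 - η * Real.exp (2 * r)) * (1 - η))
        / (2 * η * (Real.exp (2 * r) - 1) ^ 2) := by
  set E := exp (2 * r)
  have hgain : η * E ≤ 1 := mul_exp_two_mul_le_one hη0 hr
  have hradicand : 0 ≤ 1 / η - E := by
    rw [sub_nonneg, le_div_iff₀ hη0]; linarith
  have hH₀ : (-1 / (√η : ℂ) + (E : ℂ) * √η) = ((E * √η - 1 / √η : ℝ) : ℂ) := by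
    push_cast; ring
  rw [Complex.exp_pi_mul_I, hH₀, norm_ofReal_div_add_neg_one_sq,
    norm_ofReal_div_add_neg_one_sq, mul_sqrt_sub_inv_sqrt_sq hη0, mul_pow,
    sq_sqrt hradicand, sq_sqrt (by linarith)]
  field_simp

/-- The on-resonance (θ = π) output phase-quadrature spectrum of a feedback
oscillator with an in-loop phase-sensitive amplifier is finite:
`(1/2)|H₀ᵖ(π)|² + (1/2)|H_Gᵖ(π)|²
  = [(1 − ηe^{2r})² + (1 − ηe^{2r})(1 − η)]/(2η(e^{2r} − 1)²)`. -/
theorem stmt_15 (η r : ℝ) (hη0 : 0 < η) (hη1 : η < 1)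
    (hr0 : 0 < r) (hr : r ≤ -(1 / 2) * Real.log η) :
    (1 / 2) * ‖
        ((Complex.exp ((Real.pi : ℂ) * Complex.I) / (Real.sqrt η : ℂ)
            + ((Real.exp (2 * r) : ℝ) : ℂ) * (Real.sqrt η : ℂ))
          / (((Real.exp (2 * r) : ℝ) : ℂ) + Complex.exp ((Real.pi : ℂ) * Complex.I)))‖ ^ 2
      + (1 / 2) * ‖
        ((((Real.sqrt (1 / η - Real.exp (2 * r)) * Real.sqrt (1 - η) : ℝ)) : ℂ)
          / (((Real.exp (2 * r) : ℝ) : ℂ) + Complex.exp ((Real.pi : ℂ) * Complex.I)))‖ ^ 2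
    = ((1 - η * Real.exp (2 * r)) ^ 2 + (1 - η * Real.exp (2 * r)) * (1 - η))
        / (2 * η * (Real.exp (2 * r) - 1) ^ 2) :=
  stmt_15_general η r hη0 hη1 hr
end

section
/- Let V be a vector space over ℂ, let η, r be real numbers with 0 < η < 1 and e^{2r} ≤ 1/η, set G = e^{−r}/√η (so G ≥ 1 and G e^{r} √η = 1), and let z ∈ ℂ with e^{2r} + z ≠ 0. Suppose p_out⁻, p_s, p_out⁺, p_out, p_in, p₀, p_G ∈ V satisfy: p_out⁻ = e^{−r}·p_s; p_s = G·p_in − √(G²−1)·p_G; p_out⁺ = −√η·p_out⁻ + √(1−η)·p₀; p_out = √(1−η)·p_out⁻ + √η·p₀; and p_in = z·p_out⁺. Then p_out = ((z/√η + e^{2r}√η)/(e^{2r} + z))·p₀ − ((√(1/η − e^{2r})·√(1−η))/(e^{2r} + z))·p_G. -/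
/-!
With `E = e^{2r}`, the saturation condition reads `E · e^{-r} G √η = 1`, so one round trip
through the loop gives `(E + z) • p_out⁻ = (z √(1-η) / √η) • p₀ - E e^{-r} √(G²-1) • p_G`,
and `E e^{-r} √(G²-1) = √(1/η - E)` because `E e^{-2r} = 1`. The out-coupler then mixes
`p_out⁻` with `p₀`, and `(1 - η) + η = 1` collapses the `p₀` coefficient.
-/

section LoopAlgebra

variable {K V : Type*} [Field K] [AddCommGroup V] [Module K V]

theorem add_smul_intracavity_eq {E a G c s t z : K} (hgain : E * (a * G * s) = 1) (hs : s ≠ 0)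
    {poutm ps poutp pin p₀ pG : V}
    (h1 : poutm = a • ps) (h2 : ps = G • pin - c • pG)
    (h3 : poutp = -s • poutm + t • p₀) (h5 : pin = z • poutp) :
    (E + z) • poutm = (z * t / s) • p₀ - (E * a * c) • pG := by
  subst h2 h3 h5
  have hEaG : E * a * G = 1 / s := by field_simp; linear_combination hgain
  linear_combination (norm := skip) E • h1
  match_scalars
  · linear_combination (-z) * hgain
  · linear_combination (z * t) * hEaG
  · ring

theorem output_eq_of_add_smul_intracavity_eq {E q s t z : K} (hst : t ^ 2 + s ^ 2 = 1)
    (hs : s ≠ 0) (hEz : E + z ≠ 0) {poutm pout p₀ pG : V}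
    (hloop : (E + z) • poutm = (z * t / s) • p₀ - q • pG)
    (h4 : pout = t • poutm + s • p₀) :
    pout = ((z / s + E * s) / (E + z)) • p₀ - (q * t / (E + z)) • pG := by
  rw [← eq_inv_smul_iff₀ hEz] at hloop
  rw [h4, hloop]
  match_scalars
  · field_simp
    linear_combination z * hst
  · field_simp

end LoopAlgebra

namespace Real

theorem exp_two_mul_mul_exp_neg_sq (r : ℝ) : exp (2 * r) * exp (-r) ^ 2 = 1 := by
  rw [← exp_nat_mul, ← exp_add]
  norm_num

theorem mul_mul_sqrt_sq_div_sub_one {E a η : ℝ} (hE : 0 ≤ E) (ha : 0 ≤ a) (hEa : E * a ^ 2 = 1) :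
    E * a * √(a ^ 2 / η - 1) = √(1 / η - E) := by
  rw [← sqrt_sq (mul_nonneg hE ha), ← sqrt_mul (sq_nonneg _)]
  congr 1
  linear_combination ((E * a ^ 2 + 1) / η - E) * hEa

end Real

theorem stmt_16_general (V : Type*) [AddCommGroup V] [Module ℂ V]
    (η r : ℝ) (hη0 : 0 < η) (hη1 : η < 1)
    (G : ℝ) (hGdef : G = Real.exp (-r) / Real.sqrt η)
    (z : ℂ) (hz : ((Real.exp (2 * r) : ℝ) : ℂ) + z ≠ 0)
    (poutm ps poutp pout pin p₀ pG : V)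
    (h1 : poutm = ((Real.exp (-r) : ℝ) : ℂ) • ps)
    (h2 : ps = (G : ℂ) • pin - ((Real.sqrt (G ^ 2 - 1) : ℝ) : ℂ) • pG)
    (h3 : poutp = -((Real.sqrt η : ℝ) : ℂ) • poutm + ((Real.sqrt (1 - η) : ℝ) : ℂ) • p₀)
    (h4 : pout = ((Real.sqrt (1 - η) : ℝ) : ℂ) • poutm + ((Real.sqrt η : ℝ) : ℂ) • p₀)
    (h5 : pin = z • poutp) :
    pout = ((z / (Real.sqrt η : ℂ) + ((Real.exp (2 * r) : ℝ) : ℂ) * (Real.sqrt η : ℂ))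
        / (((Real.exp (2 * r) : ℝ) : ℂ) + z)) • p₀
      - ((((Real.sqrt (1 / η - Real.exp (2 * r)) : ℝ) : ℂ)
          * ((Real.sqrt (1 - η) : ℝ) : ℂ))
        / (((Real.exp (2 * r) : ℝ) : ℂ) + z)) • pG := by
  have hs : √η ≠ 0 := (Real.sqrt_pos.mpr hη0).ne'
  have hgain : Real.exp (2 * r) * (Real.exp (-r) * G * √η) = 1 := by
    rw [hGdef, mul_div_assoc', div_mul_cancel₀ _ hs, ← sq, Real.exp_two_mul_mul_exp_neg_sq]
  have hq : Real.exp (2 * r) * Real.exp (-r) * √(G ^ 2 - 1) = √(1 / η - Real.exp (2 * r)) := by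
    rw [hGdef, div_pow, Real.sq_sqrt hη0.le]
    exact Real.mul_mul_sqrt_sq_div_sub_one (Real.exp_nonneg _) (Real.exp_nonneg _)
      (Real.exp_two_mul_mul_exp_neg_sq r)
  have hst : √(1 - η) ^ 2 + √η ^ 2 = 1 := by
    rw [Real.sq_sqrt (by linarith), Real.sq_sqrt hη0.le]
    ring
  have hloop := add_smul_intracavity_eq (E := (Real.exp (2 * r) : ℂ)) (by exact_mod_cast hgain)
    (by exact_mod_cast hs) h1 h2 h3 h5
  rw [show ((Real.exp (2 * r) : ℂ) * Real.exp (-r) * (√(G ^ 2 - 1) : ℂ)) = √(1 / η - Real.exp (2 * r))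
    by exact_mod_cast hq] at hloop
  exact output_eq_of_add_smul_intracavity_eq (by exact_mod_cast hst) (by exact_mod_cast hs) hz
    hloop h4

/-- Phase-quadrature loop equations of a feedback oscillator with a phase-sensitive
in-loop amplifier (gain–loss balance `G e^r √η = 1`): the output phase quadrature is
`H₀ᵖ • p₀ − H_Gᵖ • p_G` with `H₀ᵖ = (z/√η + e^{2r}√η)/(e^{2r} + z)` and
`H_Gᵖ = √(1/η − e^{2r})√(1−η)/(e^{2r} + z)`. -/
theorem stmt_16 (V : Type*) [AddCommGroup V] [Module ℂ V]
    (η r : ℝ) (hη0 : 0 < η) (hη1 : η < 1) (hr : Real.exp (2 * r) ≤ 1 / η)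
    (G : ℝ) (hGdef : G = Real.exp (-r) / Real.sqrt η)
    (z : ℂ) (hz : ((Real.exp (2 * r) : ℝ) : ℂ) + z ≠ 0)
    (poutm ps poutp pout pin p₀ pG : V)
    (h1 : poutm = ((Real.exp (-r) : ℝ) : ℂ) • ps)
    (h2 : ps = (G : ℂ) • pin - ((Real.sqrt (G ^ 2 - 1) : ℝ) : ℂ) • pG)
    (h3 : poutp = -((Real.sqrt η : ℝ) : ℂ) • poutm + ((Real.sqrt (1 - η) : ℝ) : ℂ) • p₀)
    (h4 : pout = ((Real.sqrt (1 - η) : ℝ) : ℂ) • poutm + ((Real.sqrt η : ℝ) : ℂ) • p₀)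
    (h5 : pin = z • poutp) :
    pout = ((z / (Real.sqrt η : ℂ) + ((Real.exp (2 * r) : ℝ) : ℂ) * (Real.sqrt η : ℂ))
        / (((Real.exp (2 * r) : ℝ) : ℂ) + z)) • p₀
      - ((((Real.sqrt (1 / η - Real.exp (2 * r)) : ℝ) : ℂ)
          * ((Real.sqrt (1 - η) : ℝ) : ℂ))
        / (((Real.exp (2 * r) : ℝ) : ℂ) + z)) • pG :=
  stmt_16_general V η r hη0 hη1 G hGdef z hz poutm ps poutp pout pin p₀ pG h1 h2 h3 h4 h5
end

section
/- Let V be a vector space over ℂ, let η, r be real numbers with 0 < η < 1 and e^{2r} ≤ 1/η, set G = e^{−r}/√η, and let z ∈ ℂ with 1 + z ≠ 0. Suppose q_out⁻, q_s, q_out⁺, q_out, q_in, q₀, q_G ∈ V satisfy: q_out⁻ = e^{r}·q_s; q_s = G·q_in + √(G²−1)·q_G; q_out⁺ = −√η·q_out⁻ + √(1−η)·q₀; q_out = √(1−η)·q_out⁻ + √η·q₀; and q_in = z·q_out⁺. Then q_out = ((√η + z/√η)/(1 + z))·q₀ + ((√(1/η − e^{2r})·√(1−η))/(1 + z))·q_G.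 -/
/-- Amplitude-quadrature loop equations of a feedback oscillator with a
phase-sensitive in-loop amplifier (gain–loss balance `G = e^{−r}/√η`): the output
amplitude quadrature is `H₀^q • q₀ + H_G^q • q_G` with
`H₀^q = (√η + z/√η)/(1 + z)` and `H_G^q = √(1/η − e^{2r})√(1−η)/(1 + z)`. -/
theorem stmt_17 (V : Type*) [AddCommGroup V] [Module ℂ V]
    (η r : ℝ) (hη0 : 0 < η) (hη1 : η < 1) (hr : Real.exp (2 * r) ≤ 1 / η)
    (G : ℝ) (hGdef : G = Real.exp (-r) / Real.sqrt η)
    (z : ℂ) (hz : 1 + z ≠ 0)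
    (qoutm qs qoutp qout qin q₀ qG : V)
    (h1 : qoutm = ((Real.exp r : ℝ) : ℂ) • qs)
    (h2 : qs = (G : ℂ) • qin + ((Real.sqrt (G ^ 2 - 1) : ℝ) : ℂ) • qG)
    (h3 : qoutp = -((Real.sqrt η : ℝ) : ℂ) • qoutm + ((Real.sqrt (1 - η) : ℝ) : ℂ) • q₀)
    (h4 : qout = ((Real.sqrt (1 - η) : ℝ) : ℂ) • qoutm + ((Real.sqrt η : ℝ) : ℂ) • q₀)
    (h5 : qin = z • qoutp) :
    qout = (((Real.sqrt η : ℂ) + z / (Real.sqrt η : ℂ)) / (1 + z)) • q₀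
      + ((((Real.sqrt (1 / η - Real.exp (2 * r)) : ℝ) : ℂ)
          * ((Real.sqrt (1 - η) : ℝ) : ℂ)) / (1 + z)) • qG := by
  set a : ℂ := ((Real.sqrt η : ℝ) : ℂ) with ha_def
  set c : ℂ := ((Real.sqrt (1 - η) : ℝ) : ℂ) with hc_def
  set E : ℂ := ((Real.exp r : ℝ) : ℂ) with hE_def
  set s : ℂ := ((Real.sqrt (G ^ 2 - 1) : ℝ) : ℂ) with hs_def
  have haR : Real.sqrt η > 0 := Real.sqrt_pos.mpr hη0
  have ha : a ≠ 0 := by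
    simp [ha_def, Complex.ofReal_ne_zero, ne_of_gt haR]
  have haa : a * a = (η : ℂ) := by
    rw [ha_def, ← Complex.ofReal_mul, Real.mul_self_sqrt hη0.le]
  have hcc : c * c = 1 - (η : ℂ) := by
    rw [hc_def, ← Complex.ofReal_mul, Real.mul_self_sqrt (by linarith)]
    push_cast; ring
  have hEGr : Real.exp r * G = 1 / Real.sqrt η := by
    rw [hGdef, mul_div_assoc', ← Real.exp_add]
    simp
  have hEG : E * (G : ℂ) = 1 / a := by
    rw [hE_def, ha_def, ← Complex.ofReal_mul, hEGr]; push_cast; ring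
  have hG2 : G ^ 2 = Real.exp (-(2 * r)) / η := by
    rw [hGdef, div_pow, Real.sq_sqrt hη0.le, pow_two, ← Real.exp_add]
    congr 2
    ring
  have hG1 : (1 : ℝ) ≤ G ^ 2 := by
    rw [hG2, le_div_iff₀ hη0]
    have : Real.exp (-(2 * r)) * Real.exp (2 * r) = 1 := by
      rw [← Real.exp_add]; simp
    calc 1 * η ≤ Real.exp (-(2*r)) * Real.exp (2*r) * η := by
          rw [this]
      _ = Real.exp (-(2*r)) * (Real.exp (2*r) * η) := by ring
      _ ≤ Real.exp (-(2*r)) * 1 := by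
          apply mul_le_mul_of_nonneg_left _ (Real.exp_pos _).le
          calc Real.exp (2*r) * η ≤ (1/η) * η := by
                apply mul_le_mul_of_nonneg_right hr hη0.le
            _ = 1 := by field_simp
      _ = Real.exp (-(2*r)) := by ring
  have hEsR : Real.exp r * Real.sqrt (G ^ 2 - 1)
      = Real.sqrt (1 / η - Real.exp (2 * r)) := by
    have h1' : Real.exp r = Real.sqrt (Real.exp (2 * r)) := by
      rw [show (2:ℝ) * r = r + r by ring, Real.exp_add,
        Real.sqrt_mul_self (Real.exp_pos r).le]
    rw [h1', ← Real.sqrt_mul (Real.exp_pos _).le]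
    congr 1
    rw [mul_sub, mul_one, hG2, mul_div_assoc', ← Real.exp_add]
    simp
  have hEs : E * s = ((Real.sqrt (1 / η - Real.exp (2 * r)) : ℝ) : ℂ) := by
    rw [hE_def, hs_def, ← Complex.ofReal_mul, hEsR]
  have heq : qoutm = (E * (G:ℂ) * z * (-a)) • qoutm
      + (E * (G:ℂ) * z * c) • q₀ + (E * s) • qG := by
    conv_lhs => rw [h1, h2, h5, h3]
    module
  have hcoef : E * (G:ℂ) * z * (-a) = -z := by
    have h8 : E * (G:ℂ) * a = 1 := by rw [hEG]; exact one_div_mul_cancel ha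
    linear_combination (-z) * h8
  have key : (1 + z) • qoutm = (E * (G:ℂ) * z * c) • q₀ + (E * s) • qG := by
    rw [hcoef] at heq
    rw [add_smul, one_smul]
    nth_rw 1 [heq]
    module
  have hout : qoutm = ((E * (G:ℂ) * z * c) / (1 + z)) • q₀
      + ((E * s) / (1 + z)) • qG := by
    have h6 : qoutm = (1 + z)⁻¹ • ((1 + z) • qoutm) := by
      rw [smul_smul, inv_mul_cancel₀ hz, one_smul]
    rw [h6, key, smul_add, smul_smul, smul_smul]
    congr 1 <;> congr 1 <;> field_simp
  rw [h4, hout]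
  match_scalars
  · rw [hEG]
    field_simp
    linear_combination z * hcc + z * haa
  · linear_combination (c / (1 + z)) * hEs
end

section
/- Let η, r be real numbers with 0 < η < 1 and 0 < r ≤ −(1/2)·ln η. Then there exists δ > 0 such that for all real θ with 0 < |θ − π| < δ, |H₀ᵖ(θ)| < |H₀(θ)|, where H₀ᵖ(θ) = (e^{iθ}/√η + e^{2r}√η)/(e^{2r} + e^{iθ}) and H₀(θ) = (√η + e^{iθ}/√η)/(1 + e^{iθ}). -/
/-! The phase-sensitive transfer function is continuous at `θ = π`, since its denominator
`e^{2r} + e^{iπ} = e^{2r} - 1` does not vanish for `r > 0`; hence it is bounded near `π`.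
The phase-insensitive one has numerator tending to `√η - 1/√η ≠ 0` while its denominator
`1 + e^{iθ}` has a simple zero at `π`, so its modulus tends to infinity on the punctured
neighbourhood of `π`. -/

open Filter Topology

lemma Filter.Eventually.exists_forall_of_nhdsNE {α : Type*} [MetricSpace α] {a : α}
    {P : α → Prop} (h : ∀ᶠ x in 𝓝[≠] a, P x) :
    ∃ δ > 0, ∀ x, 0 < dist x a → dist x a < δ → P x := by
  obtain ⟨δ, hδ, hsub⟩ := Metric.mem_nhdsWithin_iff.mp h
  exact ⟨δ, hδ, fun x hpos hlt => hsub ⟨hlt, dist_pos.mp hpos⟩⟩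

lemma Filter.Tendsto.norm_div_atTop {α 𝕜 : Type*} [NormedField 𝕜] {l : Filter α}
    {f g : α → 𝕜} {c : 𝕜} (hf : Tendsto f l (𝓝 c)) (hc : c ≠ 0)
    (hg : Tendsto g l (𝓝[≠] 0)) : Tendsto (fun x => ‖f x / g x‖) l atTop := by
  simpa only [div_eq_mul_inv, norm_mul, Function.comp_def] using
    hf.norm.pos_mul_atTop (norm_pos_iff.mpr hc) (tendsto_norm_inv_nhdsNE_zero_atTop.comp hg)

lemma tendsto_one_add_exp_mul_I_nhdsNE_pi :
    Tendsto (fun θ : ℝ => 1 + Complex.exp (θ * Complex.I)) (𝓝[≠] Real.pi) (𝓝[≠] 0) := by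
  have hderiv : HasDerivAt (fun θ : ℝ => 1 + Complex.exp (θ * Complex.I)) (-Complex.I) Real.pi := by
    simpa [Complex.exp_pi_mul_I] using
      ((hasDerivAt_id Real.pi).ofReal_comp.mul_const Complex.I).cexp.const_add 1
  simpa [Complex.exp_pi_mul_I] using hderiv.tendsto_nhdsNE (neg_ne_zero.mpr Complex.I_ne_zero)

theorem stmt_18_general (η r : ℝ) (hη0 : 0 < η) (hη1 : η < 1)
    (hr0 : 0 < r) :
    ∃ δ : ℝ, 0 < δ ∧ ∀ θ : ℝ, 0 < |θ - Real.pi| → |θ - Real.pi| < δ →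
      ‖((Complex.exp (θ * Complex.I) / (Real.sqrt η : ℂ)
            + ((Real.exp (2 * r) : ℝ) : ℂ) * (Real.sqrt η : ℂ))
          / (((Real.exp (2 * r) : ℝ) : ℂ) + Complex.exp (θ * Complex.I)))‖
      < ‖(((Real.sqrt η : ℂ)
            + Complex.exp (θ * Complex.I) / (Real.sqrt η : ℂ))
          / (1 + Complex.exp (θ * Complex.I)))‖ := by
  set s : ℂ := (Real.sqrt η : ℂ)
  set A : ℂ := ((Real.exp (2 * r) : ℝ) : ℂ)
  have hs : s ≠ 0 := Complex.ofReal_ne_zero.mpr (Real.sqrt_pos.mpr hη0).ne'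
  have hs2 : s ^ 2 ≠ 1 := by
    rw [← Complex.ofReal_pow, Real.sq_sqrt hη0.le]
    exact_mod_cast hη1.ne
  have hA : A ≠ 1 := by
    rw [Ne, Complex.ofReal_eq_one, Real.exp_eq_one_iff]
    positivity
  have hE : Tendsto (fun θ : ℝ => Complex.exp (θ * Complex.I)) (𝓝[≠] Real.pi) (𝓝 (-1)) := by
    rw [← Complex.exp_pi_mul_I]
    exact (Continuous.tendsto (by fun_prop) _).mono_left nhdsWithin_le_nhds
  have hbounded := (((hE.div_const s).add_const (A * s)).div (hE.const_add A)
    (by rwa [← sub_eq_add_neg, sub_ne_zero])).norm.eventually_lt_const (lt_add_one _)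
  have hnum : s + -1 / s ≠ 0 := by
    rw [add_div' _ _ _ hs]
    exact div_ne_zero (by contrapose! hs2; linear_combination hs2) hs
  have hdiverge := ((hE.div_const s).const_add s).norm_div_atTop hnum
    tendsto_one_add_exp_mul_I_nhdsNE_pi
  obtain ⟨δ, hδ, hnear⟩ := (hbounded.and (hdiverge.eventually_gt_atTop _)).exists_forall_of_nhdsNE
  exact ⟨δ, hδ, fun θ h₁ h₂ => (hnear θ h₁ h₂).1.trans (hnear θ h₁ h₂).2⟩

/-- Near the carrier resonance `θ = π`, the phase-sensitive oscillator suppresses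
in-coupled phase noise relative to the phase-insensitive one: there is `δ > 0`
such that `|H₀ᵖ(θ)| < |H₀(θ)|` for all `θ` with `0 < |θ − π| < δ`. -/
theorem stmt_18 (η r : ℝ) (hη0 : 0 < η) (hη1 : η < 1)
    (hr0 : 0 < r) (hr : r ≤ -(1 / 2) * Real.log η) :
    ∃ δ : ℝ, 0 < δ ∧ ∀ θ : ℝ, 0 < |θ - Real.pi| → |θ - Real.pi| < δ →
      ‖((Complex.exp (θ * Complex.I) / (Real.sqrt η : ℂ)
            + ((Real.exp (2 * r) : ℝ) : ℂ) * (Real.sqrt η : ℂ))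
          / (((Real.exp (2 * r) : ℝ) : ℂ) + Complex.exp (θ * Complex.I)))‖
      < ‖(((Real.sqrt η : ℂ)
            + Complex.exp (θ * Complex.I) / (Real.sqrt η : ℂ))
          / (1 + Complex.exp (θ * Complex.I)))‖ :=
  stmt_18_general η r hη0 hη1 hr0
end

section
/- Let η, r be real numbers with 0 < η < 1 and 0 < r ≤ −(1/2)·ln η. Then for every real θ with e^{iθ} ≠ −1, |H_Gᵖ(θ)| < |H_G(θ)|, where H_Gᵖ(θ) = √(1/η − e^{2r})·√(1 − η)/(e^{2r} + e^{iθ}) and H_G(θ) = (1/√η − √η)/(1 + e^{iθ}). -/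
/-!
Write `s = e^{2r} > 1`. The numerator of `H_Gᵖ` is smaller than that of `H_G`, because
`1/√η - √η = √(1/η - 1) · √(1 - η)` and `1/η - s < 1/η - 1`; its denominator is larger in
modulus, because moving the centre of the unit circle from `-1` to `-s` (with `s ≥ 1`) pushes
every point of the circle away from the origin: `|s + z|² - |1 + z|² = (s - 1)(s + 1 + 2 Re z) ≥ 0`.
-/

open Real

lemma Complex.norm_one_add_le_norm_ofReal_add {z : ℂ} (hz : ‖z‖ = 1) {s : ℝ} (hs : 1 ≤ s) :
    ‖1 + z‖ ≤ ‖(s : ℂ) + z‖ := by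
  have hnormSq : z.re * z.re + z.im * z.im = 1 := by
    rw [← Complex.normSq_apply, ← Complex.sq_norm, hz, one_pow]
  have hre : -1 ≤ z.re := neg_le_of_abs_le (hz ▸ Complex.abs_re_le_norm z)
  rw [← sq_le_sq₀ (norm_nonneg _) (norm_nonneg _), Complex.sq_norm, Complex.sq_norm,
    Complex.normSq_apply, Complex.normSq_apply]
  simp only [Complex.add_re, Complex.add_im, Complex.one_re, Complex.one_im, Complex.ofReal_re,
    Complex.ofReal_im, zero_add]
  nlinarith [mul_nonneg (sub_nonneg.mpr hs) (show 0 ≤ s + 1 + 2 * z.re by linarith)]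

lemma one_div_sqrt_sub_sqrt {η : ℝ} (hη0 : 0 < η) (hη1 : η ≤ 1) :
    1 / √η - √η = √(1 / η - 1) * √(1 - η) := by
  have hsqrt : 0 < √η := sqrt_pos.mpr hη0
  rw [show 1 / η - 1 = (1 - η) / η by field_simp, sqrt_div (by linarith), div_mul_eq_mul_div,
    mul_self_sqrt (by linarith), eq_div_iff hsqrt.ne', sub_mul, mul_self_sqrt hη0.le,
    one_div_mul_cancel hsqrt.ne']

lemma sqrt_one_div_sub_mul_sqrt_one_sub_lt {η s : ℝ} (hη0 : 0 < η) (hη1 : η < 1) (hs : 1 < s) :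
    √(1 / η - s) * √(1 - η) < 1 / √η - √η := by
  rw [one_div_sqrt_sub_sqrt hη0 hη1.le]
  have h1η : 0 < 1 / η - 1 := sub_pos.mpr (one_lt_one_div hη0 hη1)
  exact mul_lt_mul_of_pos_right ((sqrt_lt_sqrt_iff_of_pos h1η).mpr (by linarith))
    (sqrt_pos.mpr (by linarith))

theorem stmt_19_general (η r : ℝ) (hη0 : 0 < η) (hη1 : η < 1)
    (hr0 : 0 < r) :
    ∀ θ : ℝ, Complex.exp (θ * Complex.I) ≠ -1 →
      ‖(((Real.sqrt (1 / η - Real.exp (2 * r)) : ℝ) : ℂ)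
            * ((Real.sqrt (1 - η) : ℝ) : ℂ))
          / (((Real.exp (2 * r) : ℝ) : ℂ) + Complex.exp (θ * Complex.I))‖
      < ‖(((1 / Real.sqrt η - Real.sqrt η : ℝ)) : ℂ)
          / (1 + Complex.exp (θ * Complex.I))‖ := by
  intro θ hθ
  have hs : 1 < exp (2 * r) := one_lt_exp_iff.mpr (by positivity)
  have hnum := sqrt_one_div_sub_mul_sqrt_one_sub_lt hη0 hη1 hs
  have hnum_nonneg := (mul_nonneg (sqrt_nonneg _) (sqrt_nonneg _)).trans hnum.le
  have hden := Complex.norm_one_add_le_norm_ofReal_add (Complex.norm_exp_ofReal_mul_I θ) hs.le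
  have hden_pos : 0 < ‖1 + Complex.exp (θ * Complex.I)‖ :=
    norm_pos_iff.mpr fun h ↦ hθ (eq_neg_of_add_eq_zero_right h)
  rw [norm_div, norm_div, ← Complex.ofReal_mul, Complex.norm_real, Complex.norm_real,
    norm_of_nonneg (by positivity), norm_of_nonneg hnum_nonneg]
  exact div_lt_div₀ hnum hden hnum_nonneg hden_pos

/-- A phase-sensitive in-loop amplifier contributes strictly less phase-quadrature
noise at every frequency: `|H_Gᵖ(θ)| < |H_G(θ)|` for every loop phase `θ` with
`e^{iθ} ≠ −1`. -/
theorem stmt_19 (η r : ℝ) (hη0 : 0 < η) (hη1 : η < 1)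
    (hr0 : 0 < r) (hr : r ≤ -(1 / 2) * Real.log η) :
    ∀ θ : ℝ, Complex.exp (θ * Complex.I) ≠ -1 →
      ‖(((Real.sqrt (1 / η - Real.exp (2 * r)) : ℝ) : ℂ)
            * ((Real.sqrt (1 - η) : ℝ) : ℂ))
          / (((Real.exp (2 * r) : ℝ) : ℂ) + Complex.exp (θ * Complex.I))‖
      < ‖(((1 / Real.sqrt η - Real.sqrt η : ℝ)) : ℂ)
          / (1 + Complex.exp (θ * Complex.I))‖ :=
  stmt_19_general η r hη0 hη1 hr0
end
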